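/- arXiv:0804.1445 — 3 statements merged into one kernel-verified Lean document; each statement's English description precedes it below -/
import Mathlib

section
/- Let λ ≥ μ be infinite regular cardinals, κ a cardinal, and (f_β)_{β<κ} a family of functions from λ to μ. If for every function g : κ → μ there exists a finite set F ⊆ κ such that the intersection ⋂_{β∈F} f_β⁻¹([0, g(β))) has cardinality < λ, then for every ultrafilter D uniform over λ there exists β < κ such that the pushforward ultrafilter f_β(D) is uniform over μ. -/
/-!
If no `f β (D)` were uniform, each would contain a set of size `< μ`, which the regularity of `μ`
bounds by some `g β`. Then every `f β ⁻¹' Iio (g β)` lies in `D`, hence so does each finite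
intersection of them, and the uniformity of `D` gives these intersections size `λ`, against the
hypothesis applied to `g`.
-/

open Cardinal Set

/-- An ultrafilter over a cardinal `l` (realized as the type `l.ord.toType`)
is *uniform* if every member has cardinality `l`. -/
def IsUniformUltrafilter (l : Cardinal) (D : Ultrafilter l.ord.ToType) : Prop :=
  ∀ s ∈ D, #s = l

theorem exists_subset_Iio_of_mk_lt_cof {α : Type*} [LinearOrder α] {t : Set α}
    (ht : #t < Order.cof α) : ∃ x, t ⊆ Iio x :=
  not_isCofinal_iff.mp fun hcof => (Order.cof_le hcof).not_gt ht

theorem Ultrafilter.exists_Iio_mem_of_mk_lt_cof {α : Type*} [LinearOrder α] {U : Ultrafilter α}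
    {t : Set α} (htU : t ∈ U) (ht : #t < Order.cof α) : ∃ x, Iio x ∈ U :=
  (exists_subset_Iio_of_mk_lt_cof ht).imp fun _ hx => U.mem_of_superset htU hx

theorem Cardinal.IsRegular.mk_lt_cof_toType_of_ne {m : Cardinal} (hm : m.IsRegular)
    {t : Set m.ord.ToType} (ht : #t ≠ m) : #t < Order.cof m.ord.ToType := by
  rw [Ordinal.cof_toType, hm.cof_ord]
  refine lt_of_le_of_ne ?_ ht
  simpa using mk_set_le t

theorem stmt0_general (l m : Cardinal) (hm : m.IsRegular)
    {ι : Type*} (f : ι → l.ord.ToType → m.ord.ToType)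
    (h : ∀ g : ι → m.ord.ToType, ∃ F : Finset ι,
      #(↥(⋂ β ∈ F, f β ⁻¹' Set.Iio (g β))) < l) :
    ∀ D : Ultrafilter l.ord.ToType, IsUniformUltrafilter l D →
      ∃ β : ι, ∀ t ∈ Ultrafilter.map (f β) D, #t = m := by
  intro D hD
  by_contra! hsmall
  have hbound : ∀ β, ∃ g, f β ⁻¹' Iio g ∈ D := fun β => by
    obtain ⟨t, htD, ht⟩ := hsmall β
    exact Ultrafilter.exists_Iio_mem_of_mk_lt_cof htD (hm.mk_lt_cof_toType_of_ne ht)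
  choose g hg using hbound
  obtain ⟨F, hF⟩ := h g
  have hmem : (⋂ β ∈ F, f β ⁻¹' Iio (g β)) ∈ D :=
    (Filter.biInter_finset_mem F).mpr fun β _ => hg β
  exact hF.ne (hD _ hmem)

/-- If for every `g : κ → μ` some finite intersection
`⋂_{β ∈ F} f_β⁻¹ [0, g β)` has cardinality `< λ`, then for every ultrafilter `D`
uniform over `λ` some pushforward `f_β(D)` is uniform over `μ`. -/
theorem stmt0 (l m : Cardinal) (hl : l.IsRegular) (hm : m.IsRegular) (hml : m ≤ l)
    {ι : Type*} (f : ι → l.ord.ToType → m.ord.ToType)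
    (h : ∀ g : ι → m.ord.ToType, ∃ F : Finset ι,
      #(↥(⋂ β ∈ F, f β ⁻¹' Set.Iio (g β))) < l) :
    ∀ D : Ultrafilter l.ord.ToType, IsUniformUltrafilter l D →
      ∃ β : ι, ∀ t ∈ Ultrafilter.map (f β) D, #t = m :=
  stmt0_general l m hm f h
end

section
/- Let λ ≥ μ be infinite regular cardinals, κ a cardinal, and (f_β)_{β<κ} a family of functions from λ to μ. If for every ultrafilter D uniform over λ there exists β < κ with f_β(D) uniform over μ, then for every function g : κ → μ there exists a finite set F ⊆ κ such that |⋂_{β∈F} f_β⁻¹([0, g(β)))| < λ. -/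
open Cardinal Set Filter

theorem Filter.cocardinal_inf_iInf_principal_neBot {α ι : Type*} {c : Cardinal}
    (hc : c.IsRegular) {A : ι → Set α} (hA : ∀ t : Finset ι, c ≤ #(⋂ i ∈ t, A i)) :
    (cocardinal α hc ⊓ ⨅ i, 𝓟 (A i)).NeBot := by
  classical
  rw [iInf_eq_iInf_finset, inf_iInf]
  simp_rw [iInf_principal_finset]
  refine iInf_neBot_of_directed' (fun t₁ t₂ => ⟨t₁ ∪ t₂, ?_, ?_⟩)
    fun t => cocardinal_inf_principal_neBot_iff.2 (hA t)
  all_goals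
    refine inf_le_inf_left _ (principal_mono.2 (biInter_subset_biInter_left ?_))
    simp

theorem Ultrafilter.le_mk_of_le_cocardinal {α : Type*} {c : Cardinal} {hc : c.IsRegular}
    {D : Ultrafilter α} (hD : ↑D ≤ cocardinal α hc) {s : Set α} (hs : s ∈ D) : c ≤ #s :=
  frequently_cocardinal_mem.1 ((D.eventually_iff.2 hs).frequently.filter_mono hD)

theorem isUniformUltrafilter_of_le_cocardinal {l : Cardinal} {hl : l.IsRegular}
    {D : Ultrafilter l.ord.ToType} (hD : (D : Filter l.ord.ToType) ≤ cocardinal _ hl) :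
    IsUniformUltrafilter l D :=
  fun s hs => le_antisymm ((mk_set_le s).trans (mk_ord_toType l).le)
    (Ultrafilter.le_mk_of_le_cocardinal hD hs)

theorem stmt1_general (l m : Cardinal) (hl : l.IsRegular)
    {ι : Type*} (f : ι → l.ord.ToType → m.ord.ToType)
    (h : ∀ D : Ultrafilter l.ord.ToType, IsUniformUltrafilter l D →
      ∃ β : ι, ∀ t ∈ Ultrafilter.map (f β) D, #t = m) :
    ∀ g : ι → m.ord.ToType, ∃ F : Finset ι,
      #(↥(⋂ β ∈ F, f β ⁻¹' Set.Iio (g β))) < l := by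
  intro g
  by_contra! hlarge
  obtain ⟨D, hD⟩ := @Ultrafilter.exists_le _ _ (cocardinal_inf_iInf_principal_neBot hl hlarge)
  obtain ⟨β, hβ⟩ := h D (isUniformUltrafilter_of_le_cocardinal (hD.trans inf_le_left))
  have hmem : f β ⁻¹' Iio (g β) ∈ D :=
    le_principal_iff.1 ((hD.trans inf_le_right).trans (iInf_le _ β))
  have hsmall : #(Iio (g β)) < m := by simpa using mk_Iio_lt (g β)
  exact hsmall.ne (hβ _ hmem)

/-- If every ultrafilter uniform over `λ` has some pushforward
`f_β(D)` uniform over `μ`, then for every `g : κ → μ` some finite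
intersection `⋂_{β ∈ F} f_β⁻¹ [0, g β)` has cardinality `< λ`. -/
theorem stmt1 (l m : Cardinal) (hl : l.IsRegular) (hm : m.IsRegular) (hml : m ≤ l)
    {ι : Type*} (f : ι → l.ord.ToType → m.ord.ToType)
    (h : ∀ D : Ultrafilter l.ord.ToType, IsUniformUltrafilter l D →
      ∃ β : ι, ∀ t ∈ Ultrafilter.map (f β) D, #t = m) :
    ∀ g : ι → m.ord.ToType, ∃ F : Finset ι,
      #(↥(⋂ β ∈ F, f β ⁻¹' Set.Iio (g β))) < l :=
  stmt1_general l m hl f h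
end

section
/- Let λ ≥ μ be infinite regular cardinals and κ ≥ λ. Suppose there exist functions (f_β)_{β<κ} from λ to μ such that every ultrafilter uniform over λ has some pushforward f_β(D) uniform over μ. Then the topological space μ^κ, where μ carries the topology whose open sets are exactly the intervals [0, α) for α ≤ μ and μ^κ carries the product topology, is not [λ, λ]-compact. -/
open Cardinal Set

/-- The topology on `μ` whose open sets are exactly the intervals `[0, α)`
for `α ≤ μ` (the whole space and the empty set included). -/
def intervalTopology (m : Cardinal) : TopologicalSpace m.ord.ToType :=
  .generateFrom {s | (∃ α : m.ord.ToType, s = Set.Iio α) ∨ s = Set.univ}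

/-- A space is `[λ, λ]`-compact iff every open cover by at most `λ` sets has a
subcover by fewer than `λ` sets. -/
def IsLLCompact (l : Cardinal) (X : Type*) [TopologicalSpace X] : Prop :=
  ∀ 𝒰 : Set (Set X), (∀ u ∈ 𝒰, IsOpen u) → ⋃₀ 𝒰 = Set.univ → #𝒰 ≤ l →
    ∃ 𝒱 ⊆ 𝒰, #𝒱 < l ∧ ⋃₀ 𝒱 = Set.univ

/-!
Put `x α := (f β α)_β` for `α < λ`. By `[λ, λ]`-compactness of `μ^κ` the sequence `x` has a
complete accumulation point `y`: otherwise every point has an open neighbourhood visited by `x`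
fewer than `λ` times, hence (by regularity of `λ`) only before some time `g y < λ`, and the cover
by the unions `W γ` of the neighbourhoods with `g y ≤ γ` has no subcover of size `< λ`. So `x`
converges to `y` along some ultrafilter `D` on `λ` containing no set of size `< λ`. Then
`f β (D)` converges to `y β` in `μ` for every `β`, hence contains the interval `[0, q)` for any
`q > y β`, a set of size `< μ`; no pushforward of `D` is uniform.
-/

open Filter Topology

namespace Cardinal.IsRegular

variable {l : Cardinal}

theorem exists_forall_lt_of_mk_lt (hl : l.IsRegular) {S : Set l.ord.ToType} (hS : #S < l) :
    ∃ δ, ∀ a ∈ S, a < δ := by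
  by_contra! hcofinal
  have := Order.cof_le (s := S) hcofinal
  rw [Ordinal.cof_toType, hl.cof_ord] at this
  exact this.not_gt hS

theorem isUniformUltrafilter_of_le_cocardinal (hl : l.IsRegular) {D : Ultrafilter l.ord.ToType}
    (hD : ↑D ≤ cocardinal l.ord.ToType hl) : IsUniformUltrafilter l D := by
  intro s hs
  refine (mk_set_le s).trans_eq (by rw [mk_toType, card_ord]) |>.antisymm
    (not_lt.1 fun hsmall => ?_)
  exact Ultrafilter.compl_notMem_iff.2 hs (hD (compl_mem_cocardinal_of_card_lt hsmall))

end Cardinal.IsRegular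

theorem IsLLCompact.exists_mapClusterPt_cocardinal {X : Type*} [TopologicalSpace X]
    {l : Cardinal} (hc : IsLLCompact l X) (hl : l.IsRegular) (x : l.ord.ToType → X) :
    ∃ y, MapClusterPt y (cocardinal l.ord.ToType hl) x := by
  by_contra! hno
  simp only [(nhds_basis_opens _).mapClusterPt_iff_frequently, frequently_cocardinal, not_forall,
    not_le, exists_prop, and_assoc] at hno
  choose U hyU hUopen hUsmall using hno
  choose g hg using fun y => hl.exists_forall_lt_of_mk_lt (hUsmall y)
  set W : l.ord.ToType → Set X := fun γ => ⋃ (y) (_ : g y ≤ γ), U y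
  obtain ⟨𝒱, h𝒱W, h𝒱small, h𝒱cover⟩ := hc (range W)
    (forall_mem_range.2 fun γ => isOpen_biUnion fun y _ => hUopen y)
    (eq_univ_of_forall fun z =>
      mem_sUnion.2 ⟨W (g z), mem_range_self _, mem_iUnion₂_of_mem le_rfl (hyU z)⟩)
    (mk_range_le.trans_eq (by rw [mk_toType, card_ord]))
  choose γ hγ using fun v : 𝒱 => h𝒱W v.2
  obtain ⟨δ, hδ⟩ := hl.exists_forall_lt_of_mk_lt ((mk_range_le (f := γ)).trans_lt h𝒱small)
  obtain ⟨v, hv, hxv⟩ := mem_sUnion.1 (h𝒱cover ▸ mem_univ (x δ))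
  have hxW : x δ ∈ W (γ ⟨v, hv⟩) := by rw [hγ]; exact hxv
  obtain ⟨y, hgy, hxy⟩ := mem_iUnion₂.1 hxW
  exact (hg y δ hxy).not_ge (hgy.trans (hδ _ (mem_range_self _)).le)

theorem exists_mem_nhds_mk_lt_intervalTopology {m : Cardinal} (hm : ℵ₀ ≤ m) (p : m.ord.ToType) :
    ∃ t ∈ @nhds _ (intervalTopology m) p, #t < m := by
  let := intervalTopology m
  have := Cardinal.noMaxOrder hm
  obtain ⟨q, hpq⟩ := exists_gt p
  refine ⟨Iio q, (TopologicalSpace.isOpen_generateFrom_of_mem (Or.inl ⟨q, rfl⟩)).mem_nhds hpq, ?_⟩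
  simpa using mk_Iio_lt q

theorem stmt11_general (l m : Cardinal) (hl : l.IsRegular) (hm : m.IsRegular)
    {ι : Type*}
    (f : ι → l.ord.ToType → m.ord.ToType)
    (h : ∀ D : Ultrafilter l.ord.ToType, IsUniformUltrafilter l D →
      ∃ β : ι, ∀ t ∈ Ultrafilter.map (f β) D, #t = m) :
    ¬ @IsLLCompact l (ι → m.ord.ToType)
        (@Pi.topologicalSpace ι (fun _ => m.ord.ToType)
          (fun _ => intervalTopology m)) := by
  let := intervalTopology m
  intro hc
  obtain ⟨y, hy⟩ := hc.exists_mapClusterPt_cocardinal hl fun α β => f β α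
  obtain ⟨D, hDle, hDy⟩ := mapClusterPt_iff_ultrafilter.1 hy
  obtain ⟨β, hβ⟩ := h D (hl.isUniformUltrafilter_of_le_cocardinal hDle)
  obtain ⟨t, ht, htm⟩ := exists_mem_nhds_mk_lt_intervalTopology hm.aleph0_le (y β)
  exact htm.ne (hβ t (((continuous_apply β).tendsto y).comp hDy ht))

/-- If `κ ≥ λ ≥ μ` (all as indicated, `λ, μ` infinite regular)
and there are functions `f_β : λ → μ` (`β < κ`) such that every uniform
ultrafilter over `λ` has some pushforward uniform over `μ`, then `μ^κ` with
the interval topology on `μ` and the product topology is not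
`[λ, λ]`-compact. -/
theorem stmt11 (l m : Cardinal) (hl : l.IsRegular) (hm : m.IsRegular) (hml : m ≤ l)
    {ι : Type*} (hk : l ≤ #ι)
    (f : ι → l.ord.ToType → m.ord.ToType)
    (h : ∀ D : Ultrafilter l.ord.ToType, IsUniformUltrafilter l D →
      ∃ β : ι, ∀ t ∈ Ultrafilter.map (f β) D, #t = m) :
    ¬ @IsLLCompact l (ι → m.ord.ToType)
        (@Pi.topologicalSpace ι (fun _ => m.ord.ToType)
          (fun _ => intervalTopology m)) :=
  stmt11_general l m hl hm f h
end
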